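/- Assume r and θ are nonconstant and the parametrization is proper. If the function θ(t) is bounded on Ω, then the curve has at most finitely many self-intersection points. -/

import Mathlib

/-!
Away from the finitely many points `P(F)` and the origin, a self-intersection `P(t) = P(s)` forces
`θ(t) = θ(s) + mπ` with `m ≠ 0` and `r(t)² = r(s)²`. As `θ` is bounded, only finitely many `m`
occur, so infinitely many self-intersections would realise a single shift `mπ` on an infinite set
of parameters. The rational functions `θ` and `r²` satisfy a polynomial relation `Ψ(θ, r²) = 0`,
and a rational function vanishing at infinitely many points vanishes on all of `Ω`; hence the shift
propagates to `Ψ(θ - kmπ, r²) = 0` for every `k`. For fixed `t`, `Ψ(·, r(t)²)` then has infinitely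
many roots, so `r(t)²` is a root of a fixed nonzero polynomial: `r` takes finitely many values on
the infinite set `Ω` and is therefore constant.
-/

/-- The domain Ω = {t : B(t) ≠ 0 and D(t) ≠ 0}. -/
def polarDomain (B D : Polynomial ℝ) : Set ℝ :=
  {t : ℝ | B.eval t ≠ 0 ∧ D.eval t ≠ 0}

/-- The rational function defined by a pair of polynomials, e.g. r(t) = A(t)/B(t). -/
noncomputable def ratFun (A B : Polynomial ℝ) (t : ℝ) : ℝ :=
  A.eval t / B.eval t

/-- The curve in Cartesian coordinates: P(t) = (r(t)·cos(θ(t)), r(t)·sin(θ(t))). -/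
noncomputable def polarCurve (A B C D : Polynomial ℝ) (t : ℝ) : ℝ × ℝ :=
  (ratFun A B t * Real.cos (ratFun C D t), ratFun A B t * Real.sin (ratFun C D t))

/-- Properness: outside a finite set F, (r(t), θ(t)) = (r(s), θ(s)) implies t = s. -/
def IsProperPolar (A B C D : Polynomial ℝ) : Prop :=
  ∃ F : Set ℝ, F.Finite ∧ ∀ t s : ℝ, t ∈ polarDomain B D → s ∈ polarDomain B D →
    t ∉ F → s ∉ F → ratFun A B t = ratFun A B s → ratFun C D t = ratFun C D s → t = s

/-- The set of self-intersection points of the curve. -/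
noncomputable def selfIntersections (A B C D : Polynomial ℝ) : Set (ℝ × ℝ) :=
  {p : ℝ × ℝ | ∃ t s : ℝ, t ∈ polarDomain B D ∧ s ∈ polarDomain B D ∧ t ≠ s ∧
    polarCurve A B C D t = p ∧ polarCurve A B C D s = p}

open Polynomial

theorem Set.Infinite.exists_infinite_fiber {α β : Type*} {s : Set α} {t : Set β} {f : α → β}
    (hs : s.Infinite) (hf : Set.MapsTo f s t) (ht : t.Finite) :
    ∃ y ∈ t, {x ∈ s | f x = y}.Infinite := by
  by_contra! h
  refine hs ((ht.biUnion fun y hy => h y hy).subset fun x hx => ?_)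
  exact Set.mem_biUnion (hf hx) ⟨hx, rfl⟩

namespace Polynomial

variable {K : Type*} [Field K]

theorem exists_ne_zero_sum_smul_eq_zero_of_natDegree_lt {ι : Type*} [Fintype ι] (v : ι → K[X])
    {m : ℕ} (hv : ∀ i, (v i).natDegree < m) (hm : m < Fintype.card ι) :
    ∃ c : ι → K, c ≠ 0 ∧ ∑ i, c i • v i = 0 := by
  let w : ι → degreeLT K m := fun i =>
    ⟨v i, mem_degreeLT.2 (degree_le_natDegree.trans_lt (WithBot.coe_lt_coe.2 (hv i)))⟩
  have hw : ¬ LinearIndependent K w := fun hli => by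
    have := hli.fintype_card_le_finrank
    rw [(degreeLTEquiv K m).finrank_eq, Module.finrank_fin_fun] at this
    omega
  obtain ⟨c, hc, i, hi⟩ := Fintype.not_linearIndependent_iff.1 hw
  refine ⟨c, fun h => hi (congrFun h i), ?_⟩
  simpa [w] using congrArg Subtype.val hc

theorem natDegree_pow_mul_pow_sub_le (P Q : K[X]) {j N : ℕ} (hj : j ≤ N) :
    (P ^ j * Q ^ (N - j)).natDegree ≤ N * max P.natDegree Q.natDegree := by
  calc (P ^ j * Q ^ (N - j)).natDegree
      ≤ j * P.natDegree + (N - j) * Q.natDegree :=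
        natDegree_mul_le.trans (add_le_add natDegree_pow_le natDegree_pow_le)
    _ ≤ j * max P.natDegree Q.natDegree + (N - j) * max P.natDegree Q.natDegree := by
        gcongr
        exacts [le_max_left _ _, le_max_right _ _]
    _ = N * max P.natDegree Q.natDegree := by rw [← add_mul, Nat.add_sub_cancel' hj]

theorem coeff_coeff_sum_monomial_monomial {R : Type*} [Semiring R] {m n : ℕ}
    (c : Fin m × Fin n → R) (i : Fin m × Fin n) :
    ((∑ j, monomial (j.2 : ℕ) (monomial (j.1 : ℕ) (c j))).coeff i.2).coeff i.1 = c i := by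
  simp only [finsetSum_coeff, coeff_monomial]
  rw [Finset.sum_eq_single i]
  · simp
  · rintro j - hji
    split_ifs with h2
    · rw [coeff_monomial, if_neg]
      exact fun h1 => hji (Prod.ext (Fin.ext h1) (Fin.ext h2))
    · exact coeff_zero _
  · simp

theorem evalEval_sum_monomial_monomial {R : Type*} [CommSemiring R] {m n : ℕ}
    (c : Fin m × Fin n → R) (x y : R) :
    (∑ j, monomial (j.2 : ℕ) (monomial (j.1 : ℕ) (c j))).evalEval x y =
      ∑ j, c j * x ^ (j.1 : ℕ) * y ^ (j.2 : ℕ) := by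
  simp [evalEval, eval_monomial, eval_finsetSum]

end Polynomial

def IsRationalOn {K : Type*} [Field K] (s : Set K) (f : K → K) : Prop :=
  ∃ P Q : K[X], ∀ t ∈ s, Q.eval t ≠ 0 ∧ f t = P.eval t / Q.eval t

namespace IsRationalOn

variable {K : Type*} [Field K] {s : Set K} {f g : K → K}

theorem const (c : K) : IsRationalOn s fun _ => c :=
  ⟨C c, 1, fun _ _ => by simp⟩

theorem add (hf : IsRationalOn s f) (hg : IsRationalOn s g) :
    IsRationalOn s fun t => f t + g t := by
  obtain ⟨P, Q, hPQ⟩ := hf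
  obtain ⟨P', Q', hPQ'⟩ := hg
  refine ⟨P * Q' + Q * P', Q * Q', fun t ht => ?_⟩
  obtain ⟨hQ, hf⟩ := hPQ t ht
  obtain ⟨hQ', hg⟩ := hPQ' t ht
  simp only [eval_add, eval_mul, hf, hg]
  exact ⟨mul_ne_zero hQ hQ', div_add_div _ _ hQ hQ'⟩

theorem mul (hf : IsRationalOn s f) (hg : IsRationalOn s g) :
    IsRationalOn s fun t => f t * g t := by
  obtain ⟨P, Q, hPQ⟩ := hf
  obtain ⟨P', Q', hPQ'⟩ := hg
  refine ⟨P * P', Q * Q', fun t ht => ?_⟩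
  obtain ⟨hQ, hf⟩ := hPQ t ht
  obtain ⟨hQ', hg⟩ := hPQ' t ht
  simp only [eval_mul, hf, hg]
  exact ⟨mul_ne_zero hQ hQ', div_mul_div_comm _ _ _ _⟩

theorem sub (hf : IsRationalOn s f) (c : K) : IsRationalOn s fun t => f t - c := by
  simpa only [sub_eq_add_neg] using hf.add (const (-c))

theorem pow (hf : IsRationalOn s f) (n : ℕ) : IsRationalOn s fun t => f t ^ n := by
  induction n with
  | zero => simpa only [pow_zero] using const 1
  | succ n ih => simpa only [pow_succ] using ih.mul hf

theorem polynomial_eval (hf : IsRationalOn s f) (p : K[X]) :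
    IsRationalOn s fun t => p.eval (f t) := by
  induction p using Polynomial.induction_on with
  | C a => simpa only [eval_C] using const a
  | add p q hp hq => simpa only [eval_add] using hp.add hq
  | monomial n a ih => simpa only [pow_succ, ← mul_assoc, eval_mul, eval_X] using ih.mul hf

theorem evalEval (hf : IsRationalOn s f) (hg : IsRationalOn s g) (Ψ : K[X][X]) :
    IsRationalOn s fun t => Ψ.evalEval (f t) (g t) := by
  induction Ψ using Polynomial.induction_on with
  | C p => simpa only [evalEval_C] using hf.polynomial_eval p
  | add p q hp hq => simpa only [evalEval_add] using hp.add hq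
  | monomial n a ih => simpa only [pow_succ, ← mul_assoc, evalEval_mul, evalEval_X] using ih.mul hg

theorem eqOn_zero_of_infinite (hf : IsRationalOn s f) {T : Set K} (hT : T.Infinite)
    (hTs : T ⊆ s) (hfT : Set.EqOn f 0 T) : Set.EqOn f 0 s := by
  obtain ⟨P, Q, hPQ⟩ := hf
  have hP : P = 0 := P.eq_zero_of_infinite_isRoot <| hT.mono fun t ht => by
    obtain ⟨hQ, hf⟩ := hPQ t (hTs ht)
    simpa [hf, hQ] using hfT ht
  intro t ht
  simp [(hPQ t ht).2, hP]

theorem exists_ne_zero_evalEval_eq_zero (hf : IsRationalOn s f) (hg : IsRationalOn s g) :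
    ∃ Ψ : K[X][X], Ψ ≠ 0 ∧ ∀ t ∈ s, Ψ.evalEval (f t) (g t) = 0 := by
  obtain ⟨P, Q, hPQ⟩ := hf
  obtain ⟨P', Q', hPQ'⟩ := hg
  set d := max P.natDegree Q.natDegree
  set d' := max P'.natDegree Q'.natDegree
  set N := d + d' + 1
  let v : Fin (N + 1) × Fin (N + 1) → K[X] := fun i =>
    (P ^ (i.1 : ℕ) * Q ^ (N - i.1)) * (P' ^ (i.2 : ℕ) * Q' ^ (N - i.2))
  -- the `(N + 1)²` products `v i` lie in a space of dimension `N * (d + d') + 1 < (N + 1)²`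
  have hv : ∀ i, (v i).natDegree < N * (d + d') + 1 := fun i => by
    have := natDegree_mul_le.trans (add_le_add
      (natDegree_pow_mul_pow_sub_le P Q i.1.is_le) (natDegree_pow_mul_pow_sub_le P' Q' i.2.is_le))
    rw [← mul_add] at this
    exact Nat.lt_succ_of_le this
  have hcard : N * (d + d') + 1 < Fintype.card (Fin (N + 1) × Fin (N + 1)) := by
    simp only [Fintype.card_prod, Fintype.card_fin, N]
    nlinarith
  obtain ⟨c, hc, hcv⟩ := exists_ne_zero_sum_smul_eq_zero_of_natDegree_lt v hv hcard
  refine ⟨∑ i, monomial (i.2 : ℕ) (monomial (i.1 : ℕ) (c i)), fun hΨ => hc ?_, fun t ht => ?_⟩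
  · ext i
    simpa [hΨ] using (coeff_coeff_sum_monomial_monomial c i).symm
  obtain ⟨hQ, hf⟩ := hPQ t ht
  obtain ⟨hQ', hg⟩ := hPQ' t ht
  have hclear : ∀ {x y : K} {j : ℕ}, y ≠ 0 → j ≤ N → (x / y) ^ j * y ^ N = x ^ j * y ^ (N - j) :=
    fun hy hj => by rw [← pow_sub_mul_pow _ hj, div_pow]; field_simp
  have := congrArg (eval t) hcv
  simp only [v, eval_finsetSum, eval_smul, eval_mul, eval_pow, eval_zero, smul_eq_mul] at this
  rw [evalEval_sum_monomial_monomial]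
  refine (mul_eq_zero.1 (?_ : _ * (Q.eval t ^ N * Q'.eval t ^ N) = 0)).resolve_right
    (mul_ne_zero (pow_ne_zero _ hQ) (pow_ne_zero _ hQ'))
  rw [← this, Finset.sum_mul]
  refine Finset.sum_congr rfl fun i _ => ?_
  rw [hf, hg, ← hclear hQ i.1.is_le, ← hclear hQ' i.2.is_le]
  ring

theorem exists_ne_zero_eval_eq_zero_of_shift [CharZero K] {u v : K → K}
    (hu : IsRationalOn s u) (hv : IsRationalOn s v) {a : K} (ha : a ≠ 0) {T : Set K}
    (hT : T.Infinite) (hTs : T ⊆ s) (hshift : ∀ t ∈ T, ∃ t' ∈ s, u t = u t' + a ∧ v t = v t') :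
    ∃ p : K[X], p ≠ 0 ∧ ∀ t ∈ s, p.eval (v t) = 0 := by
  obtain ⟨Ψ, hΨ, hΨuv⟩ := hv.exists_ne_zero_evalEval_eq_zero hu
  have hiter : ∀ k : ℕ, ∀ t ∈ s, Ψ.evalEval (v t) (u t - k * a) = 0 := by
    intro k
    induction k with
    | zero => simpa using hΨuv
    | succ k ih =>
      refine (hv.evalEval (hu.sub _) Ψ).eqOn_zero_of_infinite hT hTs fun t ht => ?_
      obtain ⟨t', ht', hut, hvt⟩ := hshift t ht
      have hstep : u t - (k + 1 : ℕ) * a = u t' - k * a := by rw [hut]; push_cast; ring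
      simpa only [Pi.zero_apply, hstep, hvt] using ih t' ht'
  obtain ⟨j, hj⟩ : ∃ j, Ψ.coeff j ≠ 0 := by
    by_contra! h
    exact hΨ (Polynomial.ext h)
  refine ⟨Ψ.coeff j, hj, fun t ht => ?_⟩
  have hinj : Function.Injective fun k : ℕ => u t - k * a := fun k l hkl => by
    simpa [ha] using hkl
  have hmap : Ψ.map (evalRingHom (v t)) = 0 := eq_zero_of_infinite_isRoot _ <|
    Set.infinite_of_injective_forall_mem hinj fun k => by
      simp only [Set.mem_ofPred_eq, IsRoot, map_evalRingHom_eval, hiter k t ht]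
  simpa using congrArg (coeff · j) hmap

end IsRationalOn

namespace Real

theorem exists_int_mul_pi_eq_sub_of_polar_eq {ρ ρ' a b : ℝ} (hρ : ρ ≠ 0)
    (hcos : ρ * cos a = ρ' * cos b) (hsin : ρ * sin a = ρ' * sin b) :
    ∃ m : ℤ, a - b = m * π := by
  have hsin_sub : sin (a - b) = 0 := by
    refine (mul_eq_zero.1 ?_).resolve_left hρ
    rw [sin_sub]
    linear_combination cos b * hsin - sin b * hcos
  obtain ⟨m, hm⟩ := sin_eq_zero_iff.1 hsin_sub
  exact ⟨m, hm.symm⟩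

theorem sq_eq_sq_of_polar_eq {ρ ρ' a b : ℝ}
    (hcos : ρ * cos a = ρ' * cos b) (hsin : ρ * sin a = ρ' * sin b) : ρ ^ 2 = ρ' ^ 2 := by
  linear_combination (ρ * cos a + ρ' * cos b) * hcos + (ρ * sin a + ρ' * sin b) * hsin
    - ρ ^ 2 * sin_sq_add_cos_sq a + ρ' ^ 2 * sin_sq_add_cos_sq b

theorem eq_of_polar_eq {ρ ρ' a : ℝ}
    (hcos : ρ * cos a = ρ' * cos a) (hsin : ρ * sin a = ρ' * sin a) : ρ = ρ' := by
  linear_combination cos a * hcos + sin a * hsin - (ρ - ρ') * sin_sq_add_cos_sq a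

theorem finite_setOf_abs_int_mul_le {a : ℝ} (ha : 0 < a) (M : ℝ) :
    {m : ℤ | |m * a| ≤ M}.Finite := by
  refine (Set.finite_Icc (-⌈M / a⌉) ⌈M / a⌉).subset fun m hm => ?_
  have hm' : |(m : ℝ)| ≤ M / a := by
    rwa [le_div_iff₀ ha, ← abs_of_pos ha, ← abs_mul]
  have : |m| ≤ ⌈M / a⌉ := by exact_mod_cast hm'.trans (Int.le_ceil _)
  exact abs_le.1 this

end Real

open Real

section PolarCurve

variable {A B C D : ℝ[X]}

theorem isRationalOn_ratFun {s : Set ℝ} (hB : ∀ t ∈ s, B.eval t ≠ 0) :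
    IsRationalOn s (ratFun A B) :=
  ⟨A, B, fun t ht => ⟨hB t ht, rfl⟩⟩

theorem polarDomain_infinite (hB : B ≠ 0) (hD : D ≠ 0) : (polarDomain B D).Infinite := by
  have hcompl : (polarDomain B D)ᶜ ⊆ {t | (B * D).IsRoot t} := fun t ht => by
    simp only [polarDomain, Set.mem_compl_iff, Set.mem_ofPred_eq, not_and_or, not_not] at ht
    rcases ht with h | h <;> simp [h]
  simpa using (((B * D).finite_setOfPred_isRoot (mul_ne_zero hB hD)).subset hcompl).infinite_compl

theorem natDegree_eq_zero_of_finite_image (hAB : IsCoprime A B) {s : Set ℝ} (hs : s.Infinite)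
    (hB : ∀ t ∈ s, B.eval t ≠ 0) (hfin : (ratFun A B '' s).Finite) :
    A.natDegree = 0 ∧ B.natDegree = 0 := by
  obtain ⟨y, -, hy⟩ := hs.exists_infinite_fiber (Set.mapsTo_image _ _) hfin
  have hAB' : A = C y * B := by
    rw [← sub_eq_zero]
    refine eq_zero_of_infinite_isRoot _ (hy.mono fun t hty => ?_)
    obtain ⟨ht, hty⟩ := hty
    rw [ratFun, div_eq_iff (hB t ht)] at hty
    simp [hty]
  have hBdeg : B.natDegree = 0 :=
    natDegree_eq_zero_of_isUnit (hAB.symm.isUnit_of_dvd ⟨C y, by rw [hAB', mul_comm]⟩)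
  refine ⟨Nat.eq_zero_of_le_zero ?_, hBdeg⟩
  exact hAB' ▸ (natDegree_C_mul_le y B).trans hBdeg.le

theorem exists_angle_shift_of_mem_selfIntersections {F : Set ℝ}
    (hproper : ∀ t s : ℝ, t ∈ polarDomain B D → s ∈ polarDomain B D → t ∉ F → s ∉ F →
      ratFun A B t = ratFun A B s → ratFun C D t = ratFun C D s → t = s)
    {p : ℝ × ℝ} (hp : p ∈ selfIntersections A B C D) (hpF : p ∉ polarCurve A B C D '' F)
    (hp0 : p ≠ 0) :
    ∃ t ∈ polarDomain B D, polarCurve A B C D t = p ∧ ∃ s ∈ polarDomain B D, ∃ m : ℤ, m ≠ 0 ∧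
      ratFun C D t = ratFun C D s + m * π ∧ ratFun A B t ^ 2 = ratFun A B s ^ 2 := by
  obtain ⟨t, s, ht, hs, hts, hPt, hPs⟩ := hp
  have hcos := congrArg Prod.fst (hPt.trans hPs.symm)
  have hsin := congrArg Prod.snd (hPt.trans hPs.symm)
  simp only [polarCurve] at hcos hsin
  have hr : ratFun A B t ≠ 0 := fun h => hp0 (by simp [← hPt, polarCurve, h])
  obtain ⟨m, hm⟩ := exists_int_mul_pi_eq_sub_of_polar_eq hr hcos hsin
  refine ⟨t, ht, hPt, s, hs, m, ?_, by linarith, sq_eq_sq_of_polar_eq hcos hsin⟩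
  rintro rfl
  have hθ : ratFun C D t = ratFun C D s := by simpa [sub_eq_zero] using hm
  rw [hθ] at hcos hsin
  exact hts (hproper t s ht hs (fun h => hpF ⟨t, h, hPt⟩) (fun h => hpF ⟨s, h, hPs⟩)
    (eq_of_polar_eq hcos hsin) hθ)

theorem exists_infinite_angle_shift (hproper : IsProperPolar A B C D)
    (hbounded : ∃ M : ℝ, ∀ t ∈ polarDomain B D, |ratFun C D t| ≤ M)
    (hinf : (selfIntersections A B C D).Infinite) :
    ∃ m : ℤ, m ≠ 0 ∧ ∃ T ⊆ polarDomain B D, T.Infinite ∧ ∀ t ∈ T, ∃ s ∈ polarDomain B D,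
      ratFun C D t = ratFun C D s + m * π ∧ ratFun A B t ^ 2 = ratFun A B s ^ 2 := by
  obtain ⟨M, hM⟩ := hbounded
  obtain ⟨F, hF, hproper⟩ := hproper
  set S := selfIntersections A B C D \ (polarCurve A B C D '' F ∪ {0})
  have hS : S.Infinite := hinf.sdiff ((hF.image _).union (Set.finite_singleton 0))
  have hshift := fun p (hp : p ∈ S) => exists_angle_shift_of_mem_selfIntersections hproper hp.1
    (fun h => hp.2 (Or.inl h)) (fun h => hp.2 (Or.inr h))
  choose! t ht hPt s hs m hm hθ hr using hshift
  have hmM : Set.MapsTo m S {m : ℤ | |m * π| ≤ 2 * M} := fun p hp =>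
    calc |(m p : ℝ) * π| = |ratFun C D (t p) - ratFun C D (s p)| := by
          rw [hθ p hp, add_sub_cancel_left]
      _ ≤ |ratFun C D (t p)| + |ratFun C D (s p)| := abs_sub _ _
      _ ≤ 2 * M := by linarith [hM _ (ht p hp), hM _ (hs p hp)]
  obtain ⟨m₀, -, hm₀⟩ := hS.exists_infinite_fiber hmM (finite_setOf_abs_int_mul_le pi_pos _)
  obtain ⟨p₀, hp₀S, hp₀m⟩ := hm₀.nonempty
  refine ⟨m₀, hp₀m ▸ hm p₀ hp₀S, t '' {p ∈ S | m p = m₀}, ?_, hm₀.image ?_, ?_⟩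
  · rintro _ ⟨p, hp, rfl⟩
    exact ht p hp.1
  · intro p hp q hq hpq
    rw [← hPt p hp.1, ← hPt q hq.1, hpq]
  · rintro _ ⟨p, ⟨hp, rfl⟩, rfl⟩
    exact ⟨s p, hs p hp, hθ p hp, hr p hp⟩

end PolarCurve

theorem finitely_many_self_intersections_of_theta_bounded
    (A B C D : Polynomial ℝ) (hB : B ≠ 0) (hD : D ≠ 0)
    (hAB : IsCoprime A B)
    (hr : ¬ (A.natDegree = 0 ∧ B.natDegree = 0))
    (hproper : IsProperPolar A B C D)
    (hbounded : ∃ M : ℝ, ∀ t ∈ polarDomain B D, |ratFun C D t| ≤ M) :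
    (selfIntersections A B C D).Finite := by
  by_contra hinf
  obtain ⟨m, hm, T, hTΩ, hT, hshift⟩ := exists_infinite_angle_shift hproper hbounded hinf
  have hΩB : ∀ t ∈ polarDomain B D, B.eval t ≠ 0 := fun t ht => ht.1
  obtain ⟨p, hp, hpr⟩ := (isRationalOn_ratFun fun t ht => ht.2).exists_ne_zero_eval_eq_zero_of_shift
    ((isRationalOn_ratFun hΩB).pow 2) (mul_ne_zero (Int.cast_ne_zero.2 hm) pi_ne_zero)
    hT hTΩ hshift
  have hp2 : p.comp (X ^ 2) ≠ 0 := by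
    simp [comp_eq_zero_iff, hp]
  have hfin : (ratFun A B '' polarDomain B D).Finite :=
    ((p.comp (X ^ 2)).finite_setOfPred_isRoot hp2).subset <| by
      rintro _ ⟨t, ht, rfl⟩
      simpa using hpr t ht
  exact hr (natDegree_eq_zero_of_finite_image hAB (polarDomain_infinite hB hD) hΩB hfin)
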